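/- For any density matrix ρ, C_a(ρ) ≤ S(Δ(ρ)), and for d ≥ 4 there exists a density matrix ρ with Δ(ρ) = (1/d)·I such that C_a(ρ) < S(Δ(ρ)) = log d. -/

import Mathlib

open Matrix BigOperators Complex ComplexOrder

noncomputable section

variable {ι : Type*} [Fintype ι] [DecidableEq ι]

/-- The square root of a positive semidefinite matrix, as defined in the older Mathlib
(`Matrix.PosSemidef.sqrt`, since removed). -/
def Matrix.PosSemidef.sqrt {n : Type*} [Fintype n] [DecidableEq n] {A : Matrix n n ℂ}
    (hA : A.PosSemidef) : Matrix n n ℂ :=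
  hA.1.eigenvectorUnitary.1 * diagonal ((↑) ∘ Real.sqrt ∘ hA.1.eigenvalues) *
    (star hA.1.eigenvectorUnitary : Matrix n n ℂ)

/-- A density matrix: positive semidefinite with unit trace. -/
def IsDensityMatrix (ρ : Matrix ι ι ℂ) : Prop := ρ.PosSemidef ∧ ρ.trace = 1

/-- The rank-one projector |ψ⟩⟨ψ| associated to a vector. -/
def pureState (ψ : ι → ℂ) : Matrix ι ι ℂ := Matrix.of fun i j => ψ i * (starRingEnd ℂ) (ψ j)

/-- The trace norm ‖A‖₁ = Tr √(AᴴA). -/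
def traceNorm (A : Matrix ι ι ℂ) : ℝ :=
  ((Matrix.posSemidef_conjTranspose_mul_self A).sqrt.trace).re

open Classical in
/-- Matrix square root (junk value 0 on matrices that are not PSD). -/
def matSqrt (A : Matrix ι ι ℂ) : Matrix ι ι ℂ := if h : A.PosSemidef then h.sqrt else 0

/-- Fidelity F(ρ,σ) = ‖√ρ√σ‖₁². -/
def fidelity (ρ σ : Matrix ι ι ℂ) : ℝ := (traceNorm (matSqrt ρ * matSqrt σ))^2

/-- The dephasing map Δ, keeping only the diagonal. -/
def deph (ρ : Matrix ι ι ℂ) : Matrix ι ι ℂ := Matrix.diagonal (fun i => ρ i i)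

/-- The m-distillation norm ‖ψ‖_{[m]} = min_x (‖ψ-x‖₁ + √m ‖x‖₂). -/
def distNorm (m : ℕ) (ψ : ι → ℂ) : ℝ :=
  ⨅ x : ι → ℂ, ((∑ i, ‖ψ i - x i‖) +
    Real.sqrt m * Real.sqrt (∑ i, (‖x i‖)^2))

/-- M_m: convex combinations of pure states with ℓ∞ norm at most 1/√m. -/
def Mset (m : ℕ) : Set (Matrix ι ι ℂ) :=
  {ω | ∃ (n : ℕ) (p : Fin n → ℝ) (ψ : Fin n → ι → ℂ),
    (∀ i, 0 ≤ p i) ∧ (∑ i, p i = 1) ∧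
    (∀ i, ∑ j, (‖ψ i j‖)^2 = 1) ∧
    (∀ i j, ‖ψ i j‖ ≤ 1 / Real.sqrt m) ∧
    ω = ∑ i, p i • pureState (ψ i)}

/-- N_m: density matrices with all diagonal entries at most 1/m. -/
def Nset (m : ℕ) : Set (Matrix ι ι ℂ) :=
  {ω | IsDensityMatrix ω ∧ ∀ i, (ω i i).re ≤ 1 / m}

/-- Optimal fidelity of assisted distillation F_A(ρ,m) = max_{ω ∈ M_m} F(ρ,ω). -/
def FA (ρ : Matrix ι ι ℂ) (m : ℕ) : ℝ :=
  sSup {r : ℝ | ∃ ω ∈ Mset (ι := ι) m, r = fidelity ρ ω}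


/-- Coherence of assistance, as a supremum over pure-state decompositions. -/
def Ca {d : ℕ} (ρ : Matrix (Fin d) (Fin d) ℂ) : ℝ :=
  sSup {r : ℝ | ∃ (n : ℕ) (p : Fin n → ℝ) (ψ : Fin n → Fin d → ℂ),
    (∀ i, 0 ≤ p i) ∧ (∑ i, p i = 1) ∧
    (∀ i, ∑ j, (‖ψ i j‖)^2 = 1) ∧
    ρ = ∑ i, p i • pureState (ψ i) ∧
    r = ∑ i, p i * (∑ j, Real.negMulLog ((‖ψ i j‖)^2))}

/-!
The upper bound is Jensen's inequality for the concave function `x ↦ -x log x`, applied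
coordinatewise to the diagonal `ρⱼⱼ = ∑ᵢ pᵢ |ψᵢⱼ|²`.

For the strict inequality take `ρ = (|u⟩⟨u| + |v⟩⟨v|)/d` with `(uⱼ, vⱼ)` equal to `(1, 0)`, `(0, 1)`,
`(3/5, 4/5)` and then `(3/5, 4i/5)` for all `j ≥ 3`; every pair is a unit vector, so `Δ(ρ) = I/d`.
Every component of a pure-state decomposition of `ρ` lies in `span {u, v}`, and no `a u + b v` has
uniform moduli: the first two coordinates force `|a|² = |b|² = 1/d`, the next two force the real
and imaginary parts of `a b̄` to vanish. The normalized vectors of `span {u, v}` form a compact set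
on which the entropy of `|x|²` is continuous and, by strict concavity, below `log d`; its maximum
is a bound `M < log d` for every decomposition.
-/

lemma dotProduct_pureState_mulVec_star {n : Type*} [Fintype n] (f ψ : n → ℂ) :
    f ⬝ᵥ (pureState ψ *ᵥ star f) = (normSq (f ⬝ᵥ ψ) : ℂ) := by
  rw [show pureState ψ = vecMulVec ψ (star ψ) from rfl, vecMulVec_mulVec, star_dotProduct_star,
    op_smul_eq_smul, dotProduct_smul, smul_eq_mul, mul_comm, ← mul_conj, Complex.star_def]

lemma dotProduct_sum_pureState_mulVec_star {n κ : Type*} [Fintype n] [Fintype κ]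
    (p : κ → ℝ) (ψ : κ → n → ℂ) (f : n → ℂ) :
    f ⬝ᵥ ((∑ i, p i • pureState (ψ i)) *ᵥ star f) = ((∑ i, p i * normSq (f ⬝ᵥ ψ i) : ℝ) : ℂ) := by
  simp [sum_mulVec, dotProduct_sum, smul_mulVec, dotProduct_pureState_mulVec_star]

lemma mem_span_of_forall_dotProduct_eq_zero {K n : Type*} [Field K] [Fintype n] [DecidableEq n]
    {s : Set (n → K)} {x : n → K} (h : ∀ f : n → K, (∀ y ∈ s, f ⬝ᵥ y = 0) → f ⬝ᵥ x = 0) :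
    x ∈ Submodule.span K s := by
  rw [← Subspace.forall_mem_dualAnnihilator_apply_eq_zero_iff]
  intro φ hφ
  obtain ⟨f, rfl⟩ := (dotProductEquiv K n).surjective φ
  rw [Submodule.mem_dualAnnihilator] at hφ
  exact h f fun y hy => hφ y (Submodule.subset_span hy)

lemma mem_span_of_sum_pureState_eq {n κ κ' : Type*} [Fintype n] [DecidableEq n] [Fintype κ]
    [Fintype κ'] {p : κ → ℝ} {ψ : κ → n → ℂ} {q : κ' → ℝ} {φ : κ' → n → ℂ}
    (hp : ∀ i, 0 ≤ p i) (h : ∑ i, p i • pureState (ψ i) = ∑ k, q k • pureState (φ k))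
    {i : κ} (hpi : 0 < p i) : ψ i ∈ Submodule.span ℂ (Set.range φ) := by
  refine mem_span_of_forall_dotProduct_eq_zero fun f hf => ?_
  have hsum : ∑ i, p i * normSq (f ⬝ᵥ ψ i) = 0 := by
    have := dotProduct_sum_pureState_mulVec_star q φ f
    rw [← h, dotProduct_sum_pureState_mulVec_star] at this
    simp only [hf _ (Set.mem_range_self _), map_zero, mul_zero, Finset.sum_const_zero,
      ofReal_zero, ofReal_eq_zero] at this
    exact this
  have hi := (Finset.sum_eq_zero_iff_of_nonneg fun j _ => mul_nonneg (hp j) (normSq_nonneg _)).1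
    hsum i (Finset.mem_univ i)
  exact normSq_eq_zero.1 ((mul_eq_zero.1 hi).resolve_left hpi.ne')

lemma re_sum_pureState_apply_self {n κ : Type*} [Fintype κ] (p : κ → ℝ) (ψ : κ → n → ℂ) (j : n) :
    ((∑ i, p i • pureState (ψ i)) j j).re = ∑ i, p i * ‖ψ i j‖ ^ 2 := by
  simp [Matrix.sum_apply, pureState, mul_conj, Complex.sq_norm]

lemma sum_mul_sum_negMulLog_le {n κ : Type*} [Fintype n] [Fintype κ] {p : κ → ℝ}
    (ψ : κ → n → ℂ) (hp0 : ∀ i, 0 ≤ p i) (hp1 : ∑ i, p i = 1) :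
    ∑ i, p i * ∑ j, Real.negMulLog (‖ψ i j‖ ^ 2) ≤
      ∑ j, Real.negMulLog ((∑ i, p i • pureState (ψ i)) j j).re := by
  simp_rw [Finset.mul_sum, re_sum_pureState_apply_self]
  rw [Finset.sum_comm]
  refine Finset.sum_le_sum fun j _ => ?_
  simpa using Real.concaveOn_negMulLog.le_map_sum (t := Finset.univ) (w := p)
    (fun i _ => hp0 i) hp1 (fun i _ => Set.mem_Ici.2 (sq_nonneg ‖ψ i j‖))

lemma sum_negMulLog_lt_log_card {n : Type*} [Fintype n] {q : n → ℝ} (hq0 : ∀ j, 0 ≤ q j)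
    (hq1 : ∑ j, q j = 1) (hne : ∃ j, q j ≠ (Fintype.card n : ℝ)⁻¹) :
    ∑ j, Real.negMulLog (q j) < Real.log (Fintype.card n) := by
  obtain ⟨j₀, hj₀⟩ := hne
  set N : ℝ := (Fintype.card n : ℝ)
  have hN : 0 < N := by
    have : Nonempty n := ⟨j₀⟩
    exact Nat.cast_pos.2 Fintype.card_pos
  have hnonconst : ∃ j ∈ Finset.univ, ∃ k ∈ Finset.univ, q j ≠ q k := by
    by_contra! hconst
    refine hj₀ (eq_inv_of_mul_eq_one_right ?_)
    rw [← hq1, Finset.sum_congr rfl fun k _ => (hconst j₀ (Finset.mem_univ _) k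
      (Finset.mem_univ _)).symm, Finset.sum_const, Finset.card_univ, nsmul_eq_mul]
  have hJensen := Real.strictConcaveOn_negMulLog.lt_map_sum (t := Finset.univ)
    (w := fun _ => N⁻¹) (fun _ _ => inv_pos.2 hN) (by simp [N, hN.ne'])
    (fun j _ => Set.mem_Ici.2 (hq0 j)) hnonconst
  have hmax : Real.negMulLog N⁻¹ = N⁻¹ * Real.log N := by
    simp [Real.negMulLog, Real.log_inv]
  simp only [smul_eq_mul, ← Finset.mul_sum, hq1, mul_one, hmax] at hJensen
  exact lt_of_mul_lt_mul_left hJensen (inv_nonneg.2 hN.le)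

lemma isCompact_setOf_sum_norm_sq_eq_one {n : Type*} [Fintype n] :
    IsCompact {x : n → ℂ | ∑ j, ‖x j‖ ^ 2 = 1} := by
  refine Metric.isCompact_of_isClosed_isBounded (isClosed_eq (by fun_prop) continuous_const)
    ((Metric.isBounded_closedBall (x := 0) (r := 1)).subset fun x hx => ?_)
  rw [Metric.mem_closedBall, dist_zero_right, pi_norm_le_iff_of_nonneg zero_le_one]
  intro j
  rw [← sq_le_one_iff₀ (norm_nonneg _), ← show ∑ k, ‖x k‖ ^ 2 = 1 from hx]
  exact Finset.single_le_sum (fun k _ => sq_nonneg ‖x k‖) (Finset.mem_univ j)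

lemma IsCompact.exists_lt_forall_le_of_forall_lt {X : Type*} [TopologicalSpace X] {K : Set X}
    (hK : IsCompact K) {f : X → ℝ} (hf : ContinuousOn f K) {c : ℝ} (hc : ∀ x ∈ K, f x < c) :
    ∃ M < c, ∀ x ∈ K, f x ≤ M := by
  rcases K.eq_empty_or_nonempty with rfl | hne
  · exact ⟨c - 1, by linarith, by simp⟩
  · obtain ⟨x₀, hx₀, hmax⟩ := hK.exists_isMaxOn hne hf
    exact ⟨f x₀, hc x₀ hx₀, hmax⟩

lemma Ca_le {d : ℕ} {ρ : Matrix (Fin d) (Fin d) ℂ} {M : ℝ} (hM : 0 ≤ M)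
    (h : ∀ (n : ℕ) (p : Fin n → ℝ) (ψ : Fin n → Fin d → ℂ), (∀ i, 0 ≤ p i) →
      (∀ i, ∑ j, ‖ψ i j‖ ^ 2 = 1) → ρ = ∑ i, p i • pureState (ψ i) →
      ∀ i, 0 < p i → ∑ j, Real.negMulLog (‖ψ i j‖ ^ 2) ≤ M) :
    Ca ρ ≤ M := by
  refine Real.sSup_le ?_ hM
  rintro r ⟨n, p, ψ, hp0, hp1, hψ, hρ, rfl⟩
  calc ∑ i, p i * ∑ j, Real.negMulLog (‖ψ i j‖ ^ 2) ≤ ∑ i, p i * M := by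
        refine Finset.sum_le_sum fun i _ => ?_
        rcases (hp0 i).eq_or_lt with hpi | hpi
        · simp [← hpi]
        · exact mul_le_mul_of_nonneg_left (h n p ψ hp0 hψ hρ i hpi) hpi.le
    _ = M := by rw [← Finset.sum_mul, hp1, one_mul]

namespace RankTwoWitness

def u (j : ℕ) : ℂ := if j = 0 then 1 else if j = 1 then 0 else 3 / 5

def v (j : ℕ) : ℂ := if j = 0 then 0 else if j = 1 then 1 else if j = 2 then 4 / 5 else 4 / 5 * I

lemma normSq_u_add_normSq_v (j : ℕ) : normSq (u j) + normSq (v j) = 1 := by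
  unfold u v
  split_ifs <;> norm_num [normSq_apply]

def frame (d : ℕ) : Fin 2 → Fin d → ℂ := ![fun j => u j, fun j => v j]

def rho (d : ℕ) : Matrix (Fin d) (Fin d) ℂ := ∑ k, (d : ℝ)⁻¹ • pureState (frame d k)

lemma rho_apply_self {d : ℕ} (j : Fin d) : rho d j j = (d : ℂ)⁻¹ := by
  have := normSq_u_add_normSq_v j
  simp only [rho, frame, Matrix.sum_apply, Fin.sum_univ_two, Matrix.smul_apply, pureState,
    Matrix.of_apply, Matrix.cons_val_zero, Matrix.cons_val_one, mul_conj]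
  rw [← smul_add, ← ofReal_add, this]
  simp

lemma isDensityMatrix_rho {d : ℕ} (hd : 0 < d) : IsDensityMatrix (rho d) := by
  refine ⟨posSemidef_sum _ fun k _ => (posSemidef_vecMulVec_self_star _).smul (by positivity), ?_⟩
  simp [trace, rho_apply_self, hd.ne']

lemma exists_norm_sq_ne {d : ℕ} (hd : 4 ≤ d) (a b : ℂ) :
    ∃ j : Fin d, ‖a * u j + b * v j‖ ^ 2 ≠ (d : ℝ)⁻¹ := by
  by_contra! h
  have h0 := h ⟨0, by omega⟩
  have h1 := h ⟨1, by omega⟩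
  have h2 := h ⟨2, by omega⟩
  have h3 := h ⟨3, by omega⟩
  have hd_inv : (0 : ℝ) < (d : ℝ)⁻¹ := by positivity
  simp only [u, v, Complex.sq_norm, normSq_apply] at h0 h1 h2 h3
  norm_num at h0 h1 h2 h3
  nlinarith [sq_nonneg (a.re * b.re + a.im * b.im), sq_nonneg (a.im * b.re - a.re * b.im)]

lemma exists_norm_sq_ne_of_mem_span {d : ℕ} (hd : 4 ≤ d) {x : Fin d → ℂ}
    (hx : x ∈ Submodule.span ℂ (Set.range (frame d))) : ∃ j, ‖x j‖ ^ 2 ≠ (d : ℝ)⁻¹ := by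
  obtain ⟨c, rfl⟩ := (Submodule.mem_span_range_iff_exists_fun ℂ).1 hx
  simpa [Fin.sum_univ_two, frame] using exists_norm_sq_ne hd (c 0) (c 1)

lemma Ca_rho_lt_log {d : ℕ} (hd : 4 ≤ d) : Ca (rho d) < Real.log d := by
  set K : Set (Fin d → ℂ) :=
    Submodule.span ℂ (Set.range (frame d)) ∩ {x | ∑ j, ‖x j‖ ^ 2 = 1}
  have hK : IsCompact K :=
    isCompact_setOf_sum_norm_sq_eq_one.inter_left (Submodule.closed_of_finiteDimensional _)
  obtain ⟨M, hM, hle⟩ := hK.exists_lt_forall_le_of_forall_lt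
    (f := fun x => ∑ j, Real.negMulLog (‖x j‖ ^ 2)) (by fun_prop) fun x ⟨hspan, hnorm⟩ => by
      simpa using sum_negMulLog_lt_log_card (fun j => sq_nonneg ‖x j‖) hnorm
        (by simpa using exists_norm_sq_ne_of_mem_span hd hspan)
  have hlog : 0 < Real.log d := Real.log_pos (by exact_mod_cast hd.trans_lt' (by norm_num))
  refine (Ca_le (le_max_right M 0) fun n p ψ hp0 hψ hρ i hpi => ?_).trans_lt (max_lt hM hlog)
  exact (hle (ψ i) ⟨mem_span_of_sum_pureState_eq hp0 hρ.symm hpi, hψ i⟩).trans (le_max_left _ _)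

end RankTwoWitness

theorem stmt16 (d : ℕ) :
    (∀ ρ : Matrix (Fin d) (Fin d) ℂ, IsDensityMatrix ρ →
      ∀ (n : ℕ) (p : Fin n → ℝ) (ψ : Fin n → Fin d → ℂ),
        (∀ i, 0 ≤ p i) → (∑ i, p i = 1) →
        (∀ i, ∑ j, (‖ψ i j‖)^2 = 1) →
        ρ = ∑ i, p i • pureState (ψ i) →
        ∑ i, p i * (∑ j, Real.negMulLog ((‖ψ i j‖)^2)) ≤
          ∑ j, Real.negMulLog (ρ j j).re) ∧
    (4 ≤ d → ∃ ρ : Matrix (Fin d) (Fin d) ℂ, IsDensityMatrix ρ ∧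
      (∀ j, ρ j j = (d : ℂ)⁻¹) ∧ Ca ρ < Real.log d) := by
  refine ⟨fun ρ _ n p ψ hp0 hp1 _ hρ => hρ ▸ sum_mul_sum_negMulLog_le ψ hp0 hp1, fun hd => ?_⟩
  exact ⟨RankTwoWitness.rho d, RankTwoWitness.isDensityMatrix_rho (by omega),
    RankTwoWitness.rho_apply_self, RankTwoWitness.Ca_rho_lt_log hd⟩

end
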